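/- Let k be a field, Σ a simplicial complex on the vertex set {v_1,…,v_t}, and σ=[v_1,…,v_l] a face of Σ. Let X_σ denote the image in k[Σ] (respectively in k[st̄ σ]) of the monomial X_1⋯X_l. Then the localizations of the two Stanley–Reisner rings at the multiplicative set of powers of X_σ are isomorphic: k[Σ]_{(X_σ)} ≅ k[st̄ σ]_{(X_σ)}; the isomorphism is induced by the inclusion of polynomial rings k[X_1,…,X_r] ↪ k[X_1,…,X_t], where v_1,…,v_r are the vertices of st̄ σ. -/

import Mathlib

/-!
In `k[Σ]` one has `X_σ X_τ = X_{σ ∪ τ} X_{σ ∩ τ}`, so once `X_σ` is inverted every monomial `X_τ`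
with `σ ∪ τ ∉ Σ` vanishes; in particular so does every variable outside the closed star.
Hence the map `k[X_1,…,X_t] → k[X_1,…,X_r]` killing the variables `X_{r+1},…,X_t` descends to
`k[Σ]_{X_σ} → k[st̄ σ]_{X_σ}`, and the inclusion `k[X_1,…,X_r] ↪ k[X_1,…,X_t]` descends the
other way, because a non-face `τ` of `st̄ σ` has `σ ∪ τ ∉ Σ`. The two maps are mutually inverse
since they are on the variables.
-/

set_option synthInstance.maxHeartbeats 1000000
set_option maxHeartbeats 2000000

open Finset

/-- An abstract simplicial complex on the vertex set `{v_1, …, v_n}` (modelled as `Fin n`). -/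
structure AbstractSimplicialComplexFin (n : ℕ) where
  faces : Finset (Finset (Fin n))
  down_closed : ∀ σ ∈ faces, ∀ τ, τ ⊆ σ → τ ∈ faces
  singleton_mem : ∀ i : Fin n, {i} ∈ faces
  empty_mem : (∅ : Finset (Fin n)) ∈ faces

/-- The Stanley–Reisner ideal of a family `P` of faces with vertices in `V`:
the ideal generated by the squarefree monomials corresponding to non-faces. -/
noncomputable def srIdeal (k : Type) [CommRing k] {V : Type} (P : Set (Finset V)) :
    Ideal (MvPolynomial V k) :=
  Ideal.span ((fun s : Finset V => ∏ i ∈ s, MvPolynomial.X i) '' {s | s ∉ P})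

/-- The Stanley–Reisner (face) ring of a family of faces. -/
abbrev srRing (k : Type) [CommRing k] {V : Type} (P : Set (Finset V)) : Type :=
  MvPolynomial V k ⧸ srIdeal k P

/-- The image in the Stanley–Reisner ring of the squarefree monomial supported on `σ`. -/
noncomputable def srMonomial (k : Type) [CommRing k] {V : Type} (P : Set (Finset V))
    (σ : Finset V) : srRing k P :=
  Ideal.Quotient.mk (srIdeal k P) (∏ i ∈ σ, MvPolynomial.X i)

/-- The natural map from the polynomial ring to the localization of the Stanley–Reisner
ring at the powers of the monomial `X_σ`. -/
noncomputable def toLocalizedSR (k : Type) [CommRing k] {V : Type} (P : Set (Finset V))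
    (σ : Finset V) :
    MvPolynomial V k →+* Localization.Away (srMonomial k P σ) :=
  (algebraMap (srRing k P) (Localization.Away (srMonomial k P σ))).comp
    (Ideal.Quotient.mk (srIdeal k P))

open MvPolynomial

section StanleyReisner

variable {k : Type} [CommRing k] {V : Type} (P : Set (Finset V))

theorem srMonomial_eq_zero {s : Finset V} (h : s ∉ P) : srMonomial k P s = 0 :=
  Ideal.Quotient.eq_zero_iff_mem.mpr (Ideal.subset_span ⟨s, h, rfl⟩)

theorem srMonomial_mul [DecidableEq V] (s s' : Finset V) :
    srMonomial k P s * srMonomial k P s' =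
      srMonomial k P (s ∪ s') * srMonomial k P (s ∩ s') := by
  simp only [srMonomial, ← map_mul, Finset.prod_union_inter]

theorem toLocalizedSR_prod_X (σ s : Finset V) :
    toLocalizedSR k P σ (∏ i ∈ s, X i) = algebraMap _ _ (srMonomial k P s) :=
  rfl

theorem toLocalizedSR_prod_X_isUnit (σ : Finset V) :
    IsUnit (toLocalizedSR k P σ (∏ i ∈ σ, X i)) :=
  IsLocalization.Away.algebraMap_isUnit (srMonomial k P σ)

theorem toLocalizedSR_prod_X_eq_zero [DecidableEq V] {σ s : Finset V} (h : σ ∪ s ∉ P) :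
    toLocalizedSR k P σ (∏ i ∈ s, X i) = 0 := by
  have hmul : algebraMap (srRing k P) (Localization.Away (srMonomial k P σ))
      (srMonomial k P σ * srMonomial k P s) = 0 := by
    rw [srMonomial_mul, srMonomial_eq_zero P h, zero_mul, map_zero]
  rw [map_mul] at hmul
  exact (toLocalizedSR_prod_X_isUnit P σ).mul_right_eq_zero.mp hmul

theorem toLocalizedSR_X_eq_zero [DecidableEq V] {σ : Finset V} {v : V} (h : σ ∪ {v} ∉ P) :
    toLocalizedSR k P σ (X v) = 0 := by
  simpa using toLocalizedSR_prod_X_eq_zero P h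

variable {P} {B : Type} [CommRing B]

theorem map_eq_zero_of_mem_srIdeal {φ : MvPolynomial V k →+* B}
    (hφ : ∀ s ∉ P, φ (∏ i ∈ s, X i) = 0) {a : MvPolynomial V k} (ha : a ∈ srIdeal k P) :
    φ a = 0 := by
  refine RingHom.mem_ker.mp (Ideal.span_le.mpr ?_ ha)
  rintro _ ⟨s, hs, rfl⟩
  exact hφ s hs

noncomputable def srLocLift {σ : Finset V} (φ : MvPolynomial V k →+* B)
    (hφ : ∀ s ∉ P, φ (∏ i ∈ s, X i) = 0) (hσ : IsUnit (φ (∏ i ∈ σ, X i))) :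
    Localization.Away (srMonomial k P σ) →+* B :=
  Localization.awayLift (Ideal.Quotient.lift _ φ fun _ ↦ map_eq_zero_of_mem_srIdeal hφ) _
    (by rwa [srMonomial, Ideal.Quotient.lift_mk])

@[simp]
theorem srLocLift_toLocalizedSR {σ : Finset V} (φ : MvPolynomial V k →+* B)
    (hφ : ∀ s ∉ P, φ (∏ i ∈ s, X i) = 0) (hσ : IsUnit (φ (∏ i ∈ σ, X i)))
    (p : MvPolynomial V k) :
    srLocLift φ hφ hσ (toLocalizedSR k P σ p) = φ p := by
  rw [srLocLift, toLocalizedSR, RingHom.comp_apply, IsLocalization.Away.lift_eq,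
    Ideal.Quotient.lift_mk]

theorem localizedSR_ringHom_ext {σ : Finset V}
    {f g : Localization.Away (srMonomial k P σ) →+* B}
    (h : ∀ p, f (toLocalizedSR k P σ p) = g (toLocalizedSR k P σ p)) : f = g :=
  IsLocalization.ringHom_ext (Submonoid.powers (srMonomial k P σ))
    (Ideal.Quotient.ringHom_ext (RingHom.ext h))

end StanleyReisner

theorem Finset.exists_map_eq_of_subset_range {V W : Type} (ι : W ↪ V) {s : Finset V}
    (h : ∀ v ∈ s, v ∈ Set.range ι) : ∃ s' : Finset W, s'.map ι = s := by
  refine ⟨s.preimage ι ι.injective.injOn, Finset.ext fun v ↦ ⟨?_, fun hv ↦ ?_⟩⟩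
  · intro hv
    obtain ⟨w, hw, rfl⟩ := Finset.mem_map.mp hv
    exact Finset.mem_preimage.mp hw
  · obtain ⟨w, rfl⟩ := h v hv
    exact Finset.mem_map_of_mem ι (Finset.mem_preimage.mpr hv)

section ClosedStar

variable {k : Type} [CommRing k] {V W : Type} (ι : W ↪ V)

theorem rename_prod_X (s : Finset W) :
    rename ι (∏ i ∈ s, X i : MvPolynomial W k) = ∏ i ∈ s.map ι, X i := by
  simp [Finset.prod_map]

theorem killCompl_prod_X_map (s : Finset W) :
    killCompl (R := k) ι.injective (∏ i ∈ s.map ι, X i) = ∏ i ∈ s, X i := by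
  rw [← rename_prod_X, killCompl_rename_app]

theorem killCompl_X_of_notMem_range {v : V} (hv : v ∉ Set.range ι) :
    killCompl (R := k) ι.injective (X v) = 0 := by
  simp [killCompl, hv]

variable {P : Set (Finset V)} {Q : Set (Finset W)} {σ : Finset V} {σ' : Finset W}

theorem toLocalizedSR_killCompl_prod_X_of_notMem (hQP : ∀ s ∈ Q, s.map ι ∈ P)
    {s : Finset V} (hs : s ∉ P) :
    toLocalizedSR k Q σ' (killCompl ι.injective (∏ i ∈ s, X i)) = 0 := by
  by_cases hsι : ∀ v ∈ s, v ∈ Set.range ι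
  · obtain ⟨s', rfl⟩ := Finset.exists_map_eq_of_subset_range ι hsι
    have hs' : s' ∉ Q := fun h ↦ hs (hQP s' h)
    rw [killCompl_prod_X_map, toLocalizedSR_prod_X, srMonomial_eq_zero Q hs', map_zero]
  · push Not at hsι
    obtain ⟨v, hv, hvι⟩ := hsι
    rw [map_prod, Finset.prod_eq_zero hv (killCompl_X_of_notMem_range ι hvι), map_zero]

variable [DecidableEq V]

theorem toLocalizedSR_rename_prod_X_of_notMem (hQ : ∀ s, σ ∪ s.map ι ∈ P → s ∈ Q)
    {s : Finset W} (hs : s ∉ Q) :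
    toLocalizedSR k P σ (rename ι (∏ i ∈ s, X i)) = 0 := by
  rw [rename_prod_X]
  exact toLocalizedSR_prod_X_eq_zero P (mt (hQ s) hs)

/-- Only variables of the closed star survive in `k[P]_{X_σ}`, so forgetting the others is
harmless there. -/
theorem toLocalizedSR_rename_killCompl (hverts : ∀ v, σ ∪ {v} ∈ P → v ∈ Set.range ι)
    (p : MvPolynomial V k) :
    toLocalizedSR k P σ (rename ι (killCompl ι.injective p)) = toLocalizedSR k P σ p := by
  suffices h : (toLocalizedSR k P σ).comp ((rename ι).comp (killCompl ι.injective)).toRingHom =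
      toLocalizedSR k P σ from RingHom.congr_fun h p
  refine MvPolynomial.ringHom_ext (fun c ↦ by simp) fun v ↦ ?_
  by_cases hv : v ∈ Set.range ι
  · obtain ⟨w, rfl⟩ := hv
    have hX : killCompl (R := k) ι.injective (X (ι w)) = X w := by
      simpa using killCompl_rename_app ι.injective (X (R := k) w)
    simp [hX]
  · simp [killCompl_X_of_notMem_range ι hv,
      toLocalizedSR_X_eq_zero P (mt (hverts v) hv)]

/-- The hypotheses say that `Q` is the closed star of `σ = ι σ'` in `P`, read through `ι`. -/
noncomputable def srLocalizationEquivClosedStar (hQP : ∀ s ∈ Q, s.map ι ∈ P)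
    (hQ : ∀ s, σ ∪ s.map ι ∈ P → s ∈ Q) (hσ : σ'.map ι = σ)
    (hverts : ∀ v, σ ∪ {v} ∈ P → v ∈ Set.range ι) :
    Localization.Away (srMonomial k P σ) ≃+* Localization.Away (srMonomial k Q σ') :=
  RingEquiv.ofRingHom
    (srLocLift ((toLocalizedSR k Q σ').comp (killCompl ι.injective).toRingHom)
      (fun _ ↦ toLocalizedSR_killCompl_prod_X_of_notMem ι hQP)
      (by
        rw [RingHom.comp_apply, AlgHom.toRingHom_eq_coe, RingHom.coe_coe, ← hσ,
          killCompl_prod_X_map]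
        exact toLocalizedSR_prod_X_isUnit Q σ'))
    (srLocLift ((toLocalizedSR k P σ).comp (rename ι).toRingHom)
      (fun _ ↦ toLocalizedSR_rename_prod_X_of_notMem ι hQ)
      (by
        rw [RingHom.comp_apply, AlgHom.toRingHom_eq_coe, RingHom.coe_coe, rename_prod_X, hσ]
        exact toLocalizedSR_prod_X_isUnit P σ))
    (localizedSR_ringHom_ext fun p ↦ by simp [killCompl_rename_app])
    (localizedSR_ringHom_ext fun p ↦ by simp [toLocalizedSR_rename_killCompl ι hverts])

theorem srLocalizationEquivClosedStar_toLocalizedSR_rename (hQP : ∀ s ∈ Q, s.map ι ∈ P)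
    (hQ : ∀ s, σ ∪ s.map ι ∈ P → s ∈ Q) (hσ : σ'.map ι = σ)
    (hverts : ∀ v, σ ∪ {v} ∈ P → v ∈ Set.range ι) (p : MvPolynomial W k) :
    srLocalizationEquivClosedStar ι hQP hQ hσ hverts (toLocalizedSR k P σ (rename ι p)) =
      toLocalizedSR k Q σ' p := by
  simp [srLocalizationEquivClosedStar, killCompl_rename_app]

end ClosedStar

theorem Fin.map_castLEEmb_filter_lt {r t : ℕ} (hr : r ≤ t) {l : ℕ} (hlr : l ≤ r) :
    (univ.filter (fun i : Fin r => (i : ℕ) < l)).map (Fin.castLEEmb hr) =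
      univ.filter (fun i : Fin t => (i : ℕ) < l) := by
  ext i
  simp only [Finset.mem_map, Finset.mem_filter, Finset.mem_univ, true_and, Fin.coe_castLEEmb]
  refine ⟨?_, fun hi ↦ ⟨⟨i, hi.trans_le hlr⟩, hi, rfl⟩⟩
  rintro ⟨j, hj, rfl⟩
  exact hj

theorem srRing_localization_closedStar_general (k : Type) [Field k] (t l r : ℕ)
    (hr : r ≤ t) (hlr : l ≤ r)
    (S : AbstractSimplicialComplexFin t)
    -- the face σ = [v_1, …, v_l]
    (σ : Finset (Fin t)) (hσdef : σ = univ.filter (fun i : Fin t => (i : ℕ) < l))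
    -- the closed star of σ in Σ
    (closedStar : Finset (Finset (Fin t)))
    (hstar : closedStar = S.faces.filter (fun τ => σ ∪ τ ∈ S.faces))
    -- v_1, …, v_r are exactly the vertices of the closed star
    (hverts : ∀ i : Fin t, (∃ τ ∈ closedStar, i ∈ τ) ↔ (i : ℕ) < r)
    -- the faces of the closed star, viewed as a complex on the vertices v_1, …, v_r
    (starFaces : Set (Finset (Fin r)))
    (hstarFaces : starFaces = {s | s.map (Fin.castLEEmb hr) ∈ closedStar}) :
    ∃ e : Localization.Away (srMonomial k (↑S.faces : Set (Finset (Fin t))) σ) ≃+*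
          Localization.Away
            (srMonomial k starFaces (univ.filter (fun i : Fin r => (i : ℕ) < l))),
      ∀ p : MvPolynomial (Fin r) k,
        e (toLocalizedSR k (↑S.faces : Set (Finset (Fin t))) σ
            (MvPolynomial.rename (Fin.castLE hr) p)) =
          toLocalizedSR k starFaces (univ.filter (fun i : Fin r => (i : ℕ) < l)) p := by
  have hQP : ∀ s ∈ starFaces, s.map (Fin.castLEEmb hr) ∈ (S.faces : Set (Finset (Fin t))) := by
    intro s hs
    rw [hstarFaces, Set.mem_ofPred_eq, hstar] at hs
    exact (mem_filter.mp hs).1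
  have hQ : ∀ s, σ ∪ s.map (Fin.castLEEmb hr) ∈ (S.faces : Set (Finset (Fin t))) →
      s ∈ starFaces := by
    intro s hs
    rw [hstarFaces, Set.mem_ofPred_eq, hstar]
    exact mem_filter.mpr ⟨S.down_closed _ hs _ subset_union_right, hs⟩
  have hσι : (univ.filter (fun i : Fin r => (i : ℕ) < l)).map (Fin.castLEEmb hr) = σ :=
    hσdef ▸ Fin.map_castLEEmb_filter_lt hr hlr
  have hvertsι : ∀ v, σ ∪ {v} ∈ (S.faces : Set (Finset (Fin t))) →
      v ∈ Set.range (Fin.castLEEmb hr) := by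
    intro v hv
    rw [Fin.coe_castLEEmb, Fin.range_castLE]
    exact (hverts v).mp
      ⟨{v}, hstar ▸ mem_filter.mpr ⟨S.singleton_mem v, hv⟩, mem_singleton_self v⟩
  exact ⟨srLocalizationEquivClosedStar _ hQP hQ hσι hvertsι,
    srLocalizationEquivClosedStar_toLocalizedSR_rename _ hQP hQ hσι hvertsι⟩

/-- Let `k` be a field, `Σ` a simplicial complex on the vertex set `{v_1,…,v_t}`, and
`σ = [v_1,…,v_l]` a face of `Σ`.  Let `{v_1,…,v_r}` be the vertices of the closed star
`st̄ σ = {τ ∈ Σ : σ ∪ τ ∈ Σ}`, and let `X_σ` denote the image of the monomial `X_1⋯X_l`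
in `k[Σ]` (resp. in `k[st̄ σ]`).  Then the localizations of the two Stanley–Reisner rings
at the powers of `X_σ` are isomorphic, via an isomorphism induced by the inclusion of
polynomial rings `k[X_1,…,X_r] ↪ k[X_1,…,X_t]`. -/
theorem srRing_localization_closedStar (k : Type) [Field k] (t l r : ℕ)
    (hl : l ≤ t) (hr : r ≤ t) (hlr : l ≤ r)
    (S : AbstractSimplicialComplexFin t)
    -- the face σ = [v_1, …, v_l]
    (σ : Finset (Fin t)) (hσdef : σ = univ.filter (fun i : Fin t => (i : ℕ) < l))
    (hσ : σ ∈ S.faces)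
    -- the closed star of σ in Σ
    (closedStar : Finset (Finset (Fin t)))
    (hstar : closedStar = S.faces.filter (fun τ => σ ∪ τ ∈ S.faces))
    -- v_1, …, v_r are exactly the vertices of the closed star
    (hverts : ∀ i : Fin t, (∃ τ ∈ closedStar, i ∈ τ) ↔ (i : ℕ) < r)
    -- the faces of the closed star, viewed as a complex on the vertices v_1, …, v_r
    (starFaces : Set (Finset (Fin r)))
    (hstarFaces : starFaces = {s | s.map (Fin.castLEEmb hr) ∈ closedStar}) :
    ∃ e : Localization.Away (srMonomial k (↑S.faces : Set (Finset (Fin t))) σ) ≃+*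
          Localization.Away
            (srMonomial k starFaces (univ.filter (fun i : Fin r => (i : ℕ) < l))),
      ∀ p : MvPolynomial (Fin r) k,
        e (toLocalizedSR k (↑S.faces : Set (Finset (Fin t))) σ
            (MvPolynomial.rename (Fin.castLE hr) p)) =
          toLocalizedSR k starFaces (univ.filter (fun i : Fin r => (i : ℕ) < l)) p :=
  srRing_localization_closedStar_general k t l r hr hlr S σ hσdef closedStar hstar hverts starFaces
    hstarFaces
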